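/- arXiv:1507.03635 — 2 statements merged into one kernel-verified Lean document; each statement's English description precedes it below -/
import Mathlib

section
/- Let M be a smooth manifold and let 𝓕 be an admissible sheaf of local vector fields on M. If a connected open set U ⊆ M is 𝓕-special for p ∈ U, and U' ⊆ U is a connected open subset containing p, then U' is also 𝓕-special for p. In particular, every point of M admits arbitrarily small 𝓕-special connected open neighborhoods. -/
open Set Manifold Topology

noncomputable section

variable {E : Type*} [NormedAddCommGroup E] [NormedSpace ℝ E]
  {H : Type*} [TopologicalSpace H]

/-- A (raw) vector field on the manifold `M`, given by a choice of tangent vector at every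
point.  A *local* vector field defined on an open set `U ⊆ M` is represented by such a global
assignment, where only the values on `U` are relevant. -/
abbrev VF (I : ModelWithCorners ℝ E H) (M : Type*) [TopologicalSpace M] [ChartedSpace H M] :
    Type _ :=
  (x : M) → TangentSpace I x

variable (I : ModelWithCorners ℝ E H) (M : Type*) [TopologicalSpace M] [ChartedSpace H M]
  [IsManifold I (⊤ : ℕ∞) M]

/-- Smoothness (`C^∞`) of a vector field on a subset `U` of `M`, as smoothness of the
corresponding section of the tangent bundle. -/
def IsSmoothVFOn (X : VF I M) (U : Set M) : Prop :=
  ContMDiffOn I I.tangent (⊤ : ℕ∞) (fun x => (⟨x, X x⟩ : TangentBundle I M)) U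

/-- A sheaf of local vector fields on the manifold `M`: to every connected open set `U ⊆ M` it
assigns a linear subspace `carrier U` of the smooth vector fields on `U` (represented by global
assignments of tangent vectors, two of which describe the same local field on `U` iff they agree
on `U`), closed under restriction to connected open subsets and satisfying the gluing axiom. -/
structure VFSheaf where
  carrier : Set M → Set (VF I M)
  smooth_mem : ∀ U, IsOpen U → IsConnected U → ∀ X ∈ carrier U, IsSmoothVFOn I M X U
  zero_mem : ∀ U, IsOpen U → IsConnected U → (0 : VF I M) ∈ carrier U
  add_mem : ∀ U, IsOpen U → IsConnected U → ∀ X ∈ carrier U, ∀ Y ∈ carrier U, X + Y ∈ carrier U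
  smul_mem : ∀ U, IsOpen U → IsConnected U → ∀ (c : ℝ), ∀ X ∈ carrier U, c • X ∈ carrier U
  congr_mem : ∀ U, IsOpen U → IsConnected U → ∀ X ∈ carrier U, ∀ Y : VF I M,
    (∀ x ∈ U, Y x = X x) → Y ∈ carrier U
  restrict_mem : ∀ U, IsOpen U → IsConnected U → ∀ V, IsOpen V → IsConnected V → V ⊆ U →
    ∀ X ∈ carrier U, X ∈ carrier V
  glue_mem : ∀ U, IsOpen U → IsConnected U → ∀ S : Set (Set M),
    (∀ V ∈ S, IsOpen V ∧ IsConnected V) → U = ⋃₀ S → ∀ X : VF I M, IsSmoothVFOn I M X U →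
    (∀ V ∈ S, X ∈ carrier V) → X ∈ carrier U

variable {I M}

/-- The unique continuation property for a sheaf of local vector fields: a field of the sheaf
on a connected open set vanishing on some non-empty open subset vanishes identically. -/
def VFSheaf.UniqueContinuation (F : VFSheaf I M) : Prop :=
  ∀ U, IsOpen U → IsConnected U → ∀ X ∈ F.carrier U,
    (∃ V : Set M, V.Nonempty ∧ IsOpen V ∧ V ⊆ U ∧ ∀ x ∈ V, X x = 0) → ∀ x ∈ U, X x = 0

variable (I M) in
/-- Restriction of global tangent-vector assignments to a subset `U`, as a linear map. -/
def resVF (U : Set M) : VF I M →ₗ[ℝ] ((x : U) → TangentSpace I (x : M)) where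
  toFun X := fun x => X x
  map_add' _ _ := rfl
  map_smul' _ _ := rfl

/-- The dimension (as a cardinal) of the space `𝓕(U)` of local fields of the sheaf `F` on `U`,
computed as the rank of the space of restrictions to `U` of members of `F.carrier U`. -/
def fdim (F : VFSheaf I M) (U : Set M) : Cardinal :=
  Module.rank ℝ ↥(Submodule.span ℝ (resVF I M U '' F.carrier U))

/-- A sheaf of local vector fields has bounded rank if the dimensions of the spaces `𝓕(U)`,
`U` connected open, are uniformly bounded. -/
def VFSheaf.BoundedRank (F : VFSheaf I M) : Prop :=
  ∃ N : ℕ, ∀ U : Set M, IsOpen U → IsConnected U → fdim F U ≤ (N : Cardinal)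

/-- A sheaf of local vector fields is admissible if it has the unique continuation property
and bounded rank. -/
def VFSheaf.Admissible (F : VFSheaf I M) : Prop :=
  F.UniqueContinuation ∧ F.BoundedRank

/-- `κ^𝓕_p`: the supremum (= maximum) of `dim 𝓕(U)` over connected open neighbourhoods `U`
of `p`. -/
def kappa (F : VFSheaf I M) (p : M) : Cardinal :=
  ⨆ U : {U : Set M // IsOpen U ∧ IsConnected U ∧ p ∈ U}, fdim F (U : Set M)

/-- A sheaf of local vector fields is regular if `p ↦ κ^𝓕_p` is constant on `M`. -/
def VFSheaf.Regular (F : VFSheaf I M) : Prop :=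
  ∀ p q : M, kappa F p = kappa F q

section Germs

variable (I M) in
/-- The subspace of tangent-vector assignments vanishing on some connected open neighbourhood
of `p`; the quotient by this subspace is the space of germs at `p`. -/
def germNull [LocallyConnectedSpace M] (p : M) : Submodule ℝ (VF I M) where
  carrier := {X | ∃ V : Set M, IsOpen V ∧ IsConnected V ∧ p ∈ V ∧ ∀ x ∈ V, X x = 0}
  zero_mem' :=
    ⟨connectedComponentIn univ p, isOpen_univ.connectedComponentIn,
      isConnected_connectedComponentIn_iff.mpr (mem_univ p),
      mem_connectedComponentIn (mem_univ p), fun _ _ => rfl⟩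
  add_mem' := by
    rintro X Y ⟨V₁, hV₁o, hV₁c, hpV₁, hX⟩ ⟨V₂, hV₂o, hV₂c, hpV₂, hY⟩
    refine ⟨connectedComponentIn (V₁ ∩ V₂) p, (hV₁o.inter hV₂o).connectedComponentIn,
      isConnected_connectedComponentIn_iff.mpr ⟨hpV₁, hpV₂⟩,
      mem_connectedComponentIn ⟨hpV₁, hpV₂⟩, fun x hx => ?_⟩
    have hx' := connectedComponentIn_subset (V₁ ∩ V₂) p hx
    show X x + Y x = 0
    rw [hX x hx'.1, hY x hx'.2, add_zero]
  smul_mem' := by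
    rintro c X ⟨V, hVo, hVc, hpV, hX⟩
    exact ⟨V, hVo, hVc, hpV, fun x hx => by show c • X x = 0; rw [hX x hx, smul_zero]⟩

variable (I M) in
/-- The space of germs at `p` of (arbitrary) local vector fields on `M`. -/
abbrev GermSpace [LocallyConnectedSpace M] (p : M) : Type _ :=
  VF I M ⧸ germNull I M p

variable (I M) in
/-- The germ at `p` of a local vector field, as a linear map. -/
def germAt [LocallyConnectedSpace M] (p : M) : VF I M →ₗ[ℝ] GermSpace I M p :=
  (germNull I M p).mkQ

/-- `𝔊^𝓕_p`: the space of germs at `p` of local `𝓕`-fields of the sheaf `F`, i.e. germs at `p`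
of fields `K ∈ 𝓕(U)` with `U` a connected open neighbourhood of `p`. -/
def stalk [LocallyConnectedSpace M] (F : VFSheaf I M) (p : M) :
    Submodule ℝ (GermSpace I M p) :=
  Submodule.span ℝ {g | ∃ U : Set M, ∃ X : VF I M,
    IsOpen U ∧ IsConnected U ∧ p ∈ U ∧ X ∈ F.carrier U ∧ g = germAt I M p X}

/-- A connected open set `U ∋ p` is `𝓕`-special for `p` if the (linear) germ map
`𝓕(U) → 𝔊^𝓕_p` is a linear isomorphism, i.e. it is injective (fields in `𝓕(U)` with the same
germ at `p` agree on `U`) and surjective onto the space of `𝓕`-germs at `p`. -/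
def IsSpecial [LocallyConnectedSpace M] (F : VFSheaf I M) (U : Set M) (p : M) : Prop :=
  IsOpen U ∧ IsConnected U ∧ p ∈ U ∧
    (∀ K₁ ∈ F.carrier U, ∀ K₂ ∈ F.carrier U,
      germAt I M p K₁ = germAt I M p K₂ → ∀ x ∈ U, K₁ x = K₂ x) ∧
    (∀ g ∈ stalk F p, ∃ K ∈ F.carrier U, germAt I M p K = g)

/-- A transport of `𝓕`-germs along the curve `γ : [a,b] → M`: a family of germs
`g t ∈ 𝔊^𝓕_{γ t}` which is locally induced by a single local field of the sheaf `F`. -/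
def IsTransport [LocallyConnectedSpace M] (F : VFSheaf I M) (a b : ℝ) (γ : ℝ → M)
    (g : (t : ℝ) → GermSpace I M (γ t)) : Prop :=
  ∀ t₀ ∈ Icc a b, ∃ ε > (0 : ℝ), ∃ U : Set M, ∃ K : VF I M,
    IsOpen U ∧ IsConnected U ∧ K ∈ F.carrier U ∧
    ∀ t ∈ Ioo (t₀ - ε) (t₀ + ε) ∩ Icc a b, γ t ∈ U ∧ g t = germAt I M (γ t) K

end Germs

/-!
Injectivity of the germ map holds on every connected open neighbourhood by unique continuation,
and surjectivity passes to smaller neighbourhoods by restriction. For existence, the image of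
`𝓕(U)` in the germs at `p` grows as `U` shrinks and has dimension at most `N` by bounded rank.
A neighbourhood `U₀` of maximal image dimension therefore has the same image as each of its
connected subneighbourhoods, so this image contains every `𝓕`-germ at `p`.
-/

namespace VFSheaf

variable (F : VFSheaf I M)

def sections {U : Set M} (hU : IsOpen U) (hUc : IsConnected U) : Submodule ℝ (VF I M) where
  carrier := F.carrier U
  zero_mem' := F.zero_mem U hU hUc
  add_mem' hX hY := F.add_mem U hU hUc _ hX _ hY
  smul_mem' c _ hX := F.smul_mem U hU hUc c _ hX

theorem span_carrier {U : Set M} (hU : IsOpen U) (hUc : IsConnected U) :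
    Submodule.span ℝ (F.carrier U) = F.sections hU hUc :=
  (F.sections hU hUc).span_eq

end VFSheaf

section ExtendByZero

omit [IsManifold I (⊤ : ℕ∞) M]

variable (I) in
open Classical in
def extendByZero (U : Set M) : ((x : U) → TangentSpace I (x : M)) →ₗ[ℝ] VF I M where
  toFun φ x := if hx : x ∈ U then φ ⟨x, hx⟩ else 0
  map_add' φ ψ := by ext x; by_cases hx : x ∈ U <;> simp [hx]
  map_smul' c φ := by ext x; by_cases hx : x ∈ U <;> simp [hx]

variable [LocallyConnectedSpace M] {U : Set M} {p : M}

theorem germAt_eq_germAt_iff {X Y : VF I M} :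
    germAt I M p X = germAt I M p Y ↔
      ∃ V : Set M, IsOpen V ∧ IsConnected V ∧ p ∈ V ∧ ∀ x ∈ V, X x = Y x := by
  simp only [germAt, Submodule.mkQ_apply, Submodule.Quotient.eq]
  show (∃ V : Set M, IsOpen V ∧ IsConnected V ∧ p ∈ V ∧ ∀ x ∈ V, X x - Y x = 0) ↔ _
  simp only [sub_eq_zero]

theorem germAt_extendByZero_resVF (hU : IsOpen U) (hUc : IsConnected U) (hp : p ∈ U)
    (X : VF I M) : germAt I M p (extendByZero I U (resVF I M U X)) = germAt I M p X :=
  germAt_eq_germAt_iff.2 ⟨U, hU, hUc, hp, fun _ hx => dif_pos hx⟩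

end ExtendByZero

section GermImage

variable [LocallyConnectedSpace M] {F : VFSheaf I M} {U V : Set M} {p : M}

theorem VFSheaf.UniqueContinuation.eqOn_of_germAt_eq (hF : F.UniqueContinuation)
    (hU : IsOpen U) (hUc : IsConnected U) (hp : p ∈ U) {K₁ K₂ : VF I M}
    (h₁ : K₁ ∈ F.carrier U) (h₂ : K₂ ∈ F.carrier U) (h : germAt I M p K₁ = germAt I M p K₂) :
    ∀ x ∈ U, K₁ x = K₂ x := by
  obtain ⟨V, hV, -, hpV, hKV⟩ := germAt_eq_germAt_iff.1 h
  have hsub : K₁ - K₂ ∈ F.carrier U := (F.sections hU hUc).sub_mem h₁ h₂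
  intro x hx
  exact sub_eq_zero.1 <| hF U hU hUc _ hsub ⟨V ∩ U, ⟨p, hpV, hp⟩, hV.inter hU,
    inter_subset_right, fun y hy => sub_eq_zero.2 (hKV y hy.1)⟩ x hx

theorem IsSpecial.mono (hF : F.UniqueContinuation) (h : IsSpecial F U p) (hV : IsOpen V)
    (hVc : IsConnected V) (hp : p ∈ V) (hVU : V ⊆ U) : IsSpecial F V p := by
  obtain ⟨hU, hUc, -, -, hsurj⟩ := h
  refine ⟨hV, hVc, hp, fun K₁ h₁ K₂ h₂ => hF.eqOn_of_germAt_eq hV hVc hp h₁ h₂, fun g hg => ?_⟩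
  obtain ⟨K, hK, rfl⟩ := hsurj g hg
  exact ⟨K, F.restrict_mem U hU hUc V hV hVc hVU K hK, rfl⟩

variable (F p) in
def germImage (U : Set M) : Submodule ℝ (GermSpace I M p) :=
  (Submodule.span ℝ (F.carrier U)).map (germAt I M p)

theorem germImage_anti (hU : IsOpen U) (hUc : IsConnected U) (hV : IsOpen V)
    (hVc : IsConnected V) (hVU : V ⊆ U) : germImage F p U ≤ germImage F p V :=
  Submodule.map_mono <| Submodule.span_mono fun X hX => F.restrict_mem U hU hUc V hV hVc hVU X hX

theorem rank_germImage_le (hU : IsOpen U) (hUc : IsConnected U) (hp : p ∈ U) :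
    Module.rank ℝ (germImage F p U) ≤ fdim F U := by
  have hfactor : germAt I M p ∘ₗ extendByZero I U ∘ₗ resVF I M U = germAt I M p :=
    LinearMap.ext (germAt_extendByZero_resVF hU hUc hp)
  rw [fdim, Submodule.span_image, germImage, ← hfactor, ← LinearMap.comp_assoc,
    Submodule.map_comp]
  exact rank_map_le _ _

theorem VFSheaf.BoundedRank.finiteDimensional_germImage (hF : F.BoundedRank) (hU : IsOpen U)
    (hUc : IsConnected U) (hp : p ∈ U) : FiniteDimensional ℝ (germImage F p U) := by
  obtain ⟨N, hN⟩ := hF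
  exact Module.rank_lt_aleph0_iff.1 <|
    ((rank_germImage_le hU hUc hp).trans (hN U hU hUc)).trans_lt Cardinal.natCast_lt_aleph0

theorem VFSheaf.BoundedRank.exists_finrank_germImage_max (hF : F.BoundedRank) (p : M) :
    ∃ U₀, IsOpen U₀ ∧ IsConnected U₀ ∧ p ∈ U₀ ∧ ∀ U, IsOpen U → IsConnected U → p ∈ U →
      Module.finrank ℝ (germImage F p U) ≤ Module.finrank ℝ (germImage F p U₀) := by
  obtain ⟨N, hN⟩ := hF
  let nbhd := {U : Set M // IsOpen U ∧ IsConnected U ∧ p ∈ U}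
  have : Nonempty nbhd := by
    obtain ⟨U, -, hU, hpU, hUc⟩ := locallyConnectedSpace_iff_subsets_isOpen_isConnected.1
      ‹_› p univ Filter.univ_mem
    exact ⟨U, hU, hUc, hpU⟩
  have hbdd : BddAbove (range fun U : nbhd => Module.finrank ℝ (germImage F p U.1)) := by
    refine ⟨N, ?_⟩
    rintro _ ⟨⟨U, hU, hUc, hp⟩, rfl⟩
    exact Module.finrank_le_of_rank_le ((rank_germImage_le hU hUc hp).trans (hN U hU hUc))
  obtain ⟨_, ⟨⟨U₀, hU₀, hU₀c, hpU₀⟩, rfl⟩, hmax⟩ :=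
    hbdd.exists_isGreatest_of_nonempty (range_nonempty _)
  exact ⟨U₀, hU₀, hU₀c, hpU₀, fun U hU hUc hp => hmax ⟨⟨U, hU, hUc, hp⟩, rfl⟩⟩

theorem stalk_le_germImage_of_finrank_max (hF : F.BoundedRank) (hU : IsOpen U)
    (hUc : IsConnected U) (hp : p ∈ U)
    (hmax : ∀ V, IsOpen V → IsConnected V → p ∈ V →
      Module.finrank ℝ (germImage F p V) ≤ Module.finrank ℝ (germImage F p U)) :
    stalk F p ≤ germImage F p U := by
  refine Submodule.span_le.2 ?_
  rintro _ ⟨V, X, hV, hVc, hpV, hX, rfl⟩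
  obtain ⟨W, hWUV, hW, hpW, hWc⟩ := locallyConnectedSpace_iff_subsets_isOpen_isConnected.1
    ‹_› p (U ∩ V) (Filter.inter_mem (hU.mem_nhds hp) (hV.mem_nhds hpV))
  have := hF.finiteDimensional_germImage hW hWc hpW
  have heq : germImage F p U = germImage F p W :=
    Submodule.eq_of_le_of_finrank_le
      (germImage_anti hU hUc hW hWc (hWUV.trans inter_subset_left)) (hmax W hW hWc hpW)
  rw [heq]
  exact ⟨X, Submodule.subset_span
    (F.restrict_mem V hV hVc W hW hWc (hWUV.trans inter_subset_right) X hX), rfl⟩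

theorem VFSheaf.UniqueContinuation.isSpecial_of_stalk_le (hF : F.UniqueContinuation)
    (hU : IsOpen U) (hUc : IsConnected U) (hp : p ∈ U) (h : stalk F p ≤ germImage F p U) :
    IsSpecial F U p := by
  refine ⟨hU, hUc, hp, fun K₁ h₁ K₂ h₂ => hF.eqOn_of_germAt_eq hU hUc hp h₁ h₂, fun g hg => ?_⟩
  obtain ⟨K, hK, rfl⟩ := h hg
  rw [F.span_carrier hU hUc] at hK
  exact ⟨K, hK, rfl⟩

theorem VFSheaf.Admissible.exists_isSpecial (hF : F.Admissible) (p : M) :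
    ∃ U, IsSpecial F U p := by
  obtain ⟨U, hU, hUc, hp, hmax⟩ := hF.2.exists_finrank_germImage_max p
  exact ⟨U, hF.1.isSpecial_of_stalk_le hU hUc hp
    (stalk_le_germImage_of_finrank_max hF.2 hU hUc hp hmax)⟩

end GermImage

/-- For an admissible sheaf `𝓕`: if `U` is `𝓕`-special for `p` and
`U' ⊆ U` is a connected open subset containing `p`, then `U'` is `𝓕`-special for `p`.
In particular, every point admits arbitrarily small `𝓕`-special connected open
neighbourhoods. -/
theorem statement6 [LocallyConnectedSpace M] (F : VFSheaf I M) (hF : F.Admissible) :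
    (∀ (U U' : Set M) (p : M), IsSpecial F U p →
      IsOpen U' → IsConnected U' → p ∈ U' → U' ⊆ U → IsSpecial F U' p) ∧
    (∀ p : M, ∀ W ∈ nhds p, ∃ U'' : Set M, U'' ⊆ W ∧ IsSpecial F U'' p) := by
  refine ⟨fun U U' p h => h.mono hF.1, fun p W hW => ?_⟩
  obtain ⟨U, hU⟩ := hF.exists_isSpecial p
  obtain ⟨V, hVWU, hV, hpV, hVc⟩ := locallyConnectedSpace_iff_subsets_isOpen_isConnected.1
    ‹_› p (W ∩ U) (Filter.inter_mem hW (hU.1.mem_nhds hU.2.2.1))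
  exact ⟨V, hVWU.trans inter_subset_left, hU.mono hF.1 hV hVc hpV (hVWU.trans inter_subset_right)⟩
end
end

section
/- Let M be a smooth manifold and let 𝓕 be an admissible sheaf of local vector fields on M. Let U ⊆ M be an open set, p ∈ U, and assume that κ^𝓕_q is constant for q ∈ U. Then there exists a connected open subset U' ⊆ U containing p which is 𝓕-special for every one of its points. -/
open Set Manifold Topology

noncomputable section

variable {E : Type*} [NormedAddCommGroup E] [NormedSpace ℝ E]
  {H : Type*} [TopologicalSpace H]

variable (I : ModelWithCorners ℝ E H) (M : Type*) [TopologicalSpace M] [ChartedSpace H M]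
  [IsManifold I (⊤ : ℕ∞) M]

variable {I M}

/-! By unique continuation, restricting the fields of `𝓕(W)` to a non-empty open `V ⊆ W` is
injective, so `dim 𝓕(W) ≤ dim 𝓕(V)`. Since ranks are bounded, some connected open `U₀ ∋ p`
inside `U` has maximal `dim 𝓕(U₀)`, which is then `κ_p`, hence `κ_q` for every `q ∈ U₀`. For a
connected open `W ∋ q` inside `U₀` this squeezes `dim 𝓕(U₀) ≤ dim 𝓕(W) ≤ κ_q = dim 𝓕(U₀)`,
so restriction `𝓕(U₀) → 𝓕(W)` is onto, which is surjectivity of the germ map at `q`;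
injectivity is unique continuation again. -/

universe v

theorem Submodule.rank_map_comp_eq {R V : Type*} {W X : Type v} [Ring R] [AddCommGroup V]
    [Module R V] [AddCommGroup W] [Module R W] [AddCommGroup X] [Module R X] (A : Submodule R V)
    (f : V →ₗ[R] W) (g : W →ₗ[R] X) (hg : ∀ v ∈ A, g (f v) = 0 → f v = 0) :
    Module.rank R (A.map (g ∘ₗ f)) = Module.rank R (A.map f) := by
  have hinj : Function.Injective (g.domRestrict (A.map f)) := by
    rw [← LinearMap.ker_eq_bot, LinearMap.ker_eq_bot']
    rintro ⟨_, v, hv, rfl⟩ h0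
    exact Subtype.ext (hg v hv h0)
  rw [← rank_range_of_injective _ hinj, LinearMap.range_domRestrict, Submodule.map_comp]

variable (I M) in
def restrictVF {V W : Set M} (h : V ⊆ W) :
    ((x : W) → TangentSpace I (x : M)) →ₗ[ℝ] ((x : V) → TangentSpace I (x : M)) where
  toFun f := fun x => f ⟨x, h x.2⟩
  map_add' _ _ := rfl
  map_smul' _ _ := rfl

namespace VFSheaf

variable (F : VFSheaf I M)

def carrierSubmodule {U : Set M} (hU : IsOpen U) (hUc : IsConnected U) :
    Submodule ℝ (VF I M) where
  carrier := F.carrier U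
  zero_mem' := F.zero_mem U hU hUc
  add_mem' hX hY := F.add_mem U hU hUc _ hX _ hY
  smul_mem' c X hX := F.smul_mem U hU hUc c X hX

theorem fdim_eq_rank_map {U : Set M} (hU : IsOpen U) (hUc : IsConnected U) :
    fdim F U = Module.rank ℝ ((F.carrierSubmodule hU hUc).map (resVF I M U)) := by
  rw [fdim, show F.carrier U = F.carrierSubmodule hU hUc from rfl, ← Submodule.map_span,
    Submodule.span_eq]

variable {F}

theorem BoundedRank.fdim_lt_aleph0 (hbr : F.BoundedRank) {U : Set M} (hU : IsOpen U)
    (hUc : IsConnected U) : fdim F U < Cardinal.aleph0 :=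
  let ⟨_, hN⟩ := hbr
  (hN U hU hUc).trans_lt Cardinal.natCast_lt_aleph0

theorem BoundedRank.fdim_le_kappa (hbr : F.BoundedRank) {U : Set M} (hU : IsOpen U)
    (hUc : IsConnected U) {p : M} (hp : p ∈ U) : fdim F U ≤ kappa F p := by
  obtain ⟨N, hN⟩ := hbr
  refine le_ciSup (f := fun W : {W : Set M // IsOpen W ∧ IsConnected W ∧ p ∈ W} => fdim F W)
    ⟨N, ?_⟩ ⟨U, hU, hUc, hp⟩
  rintro _ ⟨⟨W, hWo, hWc, -⟩, rfl⟩
  exact hN W hWo hWc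

theorem BoundedRank.exists_fdim_maximal [LocallyConnectedSpace M] (hbr : F.BoundedRank)
    {U : Set M} (hU : IsOpen U) {p : M} (hp : p ∈ U) :
    ∃ U₀, IsOpen U₀ ∧ IsConnected U₀ ∧ p ∈ U₀ ∧ U₀ ⊆ U ∧
      ∀ W, IsOpen W → IsConnected W → p ∈ W → W ⊆ U → fdim F W ≤ fdim F U₀ := by
  have hfin : ∀ V, IsOpen V → IsConnected V → fdim F V < Cardinal.aleph0 :=
    fun _ hVo hVc => hbr.fdim_lt_aleph0 hVo hVc
  obtain ⟨N, hN⟩ := hbr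
  set S : Set ℕ :=
    {n | ∃ W, IsOpen W ∧ IsConnected W ∧ p ∈ W ∧ W ⊆ U ∧ (fdim F W).toNat = n}
  have hSne : S.Nonempty := by
    obtain ⟨W, hWU, hWo, hpW, hWc⟩ :=
      locallyConnectedSpace_iff_subsets_isOpen_isConnected.mp ‹_› p U (hU.mem_nhds hp)
    exact ⟨_, W, hWo, hWc, hpW, hWU, rfl⟩
  have hSbdd : BddAbove S := by
    refine ⟨N, ?_⟩
    rintro _ ⟨W, hWo, hWc, -, -, rfl⟩
    simpa using Cardinal.toNat_le_toNat (hN W hWo hWc) Cardinal.natCast_lt_aleph0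
  obtain ⟨U₀, hU₀o, hU₀c, hpU₀, hU₀U, hU₀S⟩ := Nat.sSup_mem hSne hSbdd
  refine ⟨U₀, hU₀o, hU₀c, hpU₀, hU₀U, fun W hWo hWc hpW hWU => ?_⟩
  rw [← Cardinal.toNat_le_iff_le_of_lt_aleph0 (hfin W hWo hWc) (hfin U₀ hU₀o hU₀c), hU₀S]
  exact le_csSup hSbdd ⟨W, hWo, hWc, hpW, hWU, rfl⟩

theorem UniqueContinuation.rank_map_resVF_eq (huc : F.UniqueContinuation) {W : Set M}
    (hWo : IsOpen W) (hWc : IsConnected W) {V : Set M} (hVo : IsOpen V) (hVne : V.Nonempty)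
    (hVW : V ⊆ W) {A : Submodule ℝ (VF I M)} (hA : A ≤ F.carrierSubmodule hWo hWc) :
    Module.rank ℝ (A.map (resVF I M V)) = Module.rank ℝ (A.map (resVF I M W)) := by
  refine Submodule.rank_map_comp_eq A (resVF I M W) (restrictVF I M hVW)
    fun X hX h0 => funext fun x => ?_
  exact huc W hWo hWc X (hA hX) ⟨V, hVne, hVo, hVW, fun y hy => congrFun h0 ⟨y, hy⟩⟩ x x.2

theorem UniqueContinuation.fdim_le_of_subset (huc : F.UniqueContinuation) {W : Set M}
    (hWo : IsOpen W) (hWc : IsConnected W) {V : Set M} (hVo : IsOpen V) (hVc : IsConnected V)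
    (hVW : V ⊆ W) : fdim F W ≤ fdim F V := by
  rw [F.fdim_eq_rank_map hWo hWc, F.fdim_eq_rank_map hVo hVc,
    ← huc.rank_map_resVF_eq hWo hWc hVo hVc.nonempty hVW le_rfl]
  exact Submodule.rank_mono
    (Submodule.map_mono fun X => F.restrict_mem W hWo hWc V hVo hVc hVW X)

theorem UniqueContinuation.kappa_le_of_maximal [LocallyConnectedSpace M]
    (huc : F.UniqueContinuation) {U : Set M} (hU : IsOpen U) {p : M} (hp : p ∈ U) {U₀ : Set M}
    (hmax : ∀ W, IsOpen W → IsConnected W → p ∈ W → W ⊆ U → fdim F W ≤ fdim F U₀) :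
    kappa F p ≤ fdim F U₀ := by
  refine ciSup_le' fun ⟨W, hWo, hWc, hpW⟩ => ?_
  obtain ⟨W', hW', hW'o, hpW', hW'c⟩ := locallyConnectedSpace_iff_subsets_isOpen_isConnected.mp
    ‹_› p (W ∩ U) ((hWo.inter hU).mem_nhds ⟨hpW, hp⟩)
  calc fdim F W ≤ fdim F W' :=
        huc.fdim_le_of_subset hWo hWc hW'o hW'c (hW'.trans inter_subset_left)
    _ ≤ fdim F U₀ := hmax W' hW'o hW'c hpW' (hW'.trans inter_subset_right)

theorem UniqueContinuation.exists_eqOn_of_fdim_le (huc : F.UniqueContinuation) {U₀ : Set M}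
    (hU₀o : IsOpen U₀) (hU₀c : IsConnected U₀) (hfin : fdim F U₀ < Cardinal.aleph0) {W : Set M}
    (hWo : IsOpen W) (hWc : IsConnected W) (hWU₀ : W ⊆ U₀) (hle : fdim F W ≤ fdim F U₀)
    {X : VF I M} (hX : X ∈ F.carrier W) : ∃ K ∈ F.carrier U₀, ∀ x ∈ W, K x = X x := by
  set P := (F.carrierSubmodule hU₀o hU₀c).map (resVF I M W)
  set Q := (F.carrierSubmodule hWo hWc).map (resVF I M W)
  have hrP : Module.rank ℝ P = fdim F U₀ := by
    rw [F.fdim_eq_rank_map hU₀o hU₀c,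
      huc.rank_map_resVF_eq hU₀o hU₀c hWo hWc.nonempty hWU₀ le_rfl]
  have hrQ : Module.rank ℝ Q = fdim F W := (F.fdim_eq_rank_map hWo hWc).symm
  have : Module.Free ℝ Q := Module.Free.of_divisionRing _ _
  have : FiniteDimensional ℝ Q := Module.rank_lt_aleph0_iff.mp (hrQ ▸ hle.trans_lt hfin)
  have hPQ : P = Q := Submodule.eq_of_le_of_finrank_le
    (Submodule.map_mono fun Y => F.restrict_mem U₀ hU₀o hU₀c W hWo hWc hWU₀ Y)
    (Cardinal.toNat_le_toNat (hrQ ▸ hrP ▸ hle) (hrP ▸ hfin))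
  obtain ⟨K, hK, hKX⟩ : resVF I M W X ∈ P := hPQ ▸ ⟨X, hX, rfl⟩
  exact ⟨K, hK, fun x hx => congrFun hKX ⟨x, hx⟩⟩

theorem UniqueContinuation.eqOn_of_germAt_eq_s7 [LocallyConnectedSpace M]
    (huc : F.UniqueContinuation) {U : Set M} (hUo : IsOpen U) (hUc : IsConnected U) {q : M}
    (hq : q ∈ U) {K₁ K₂ : VF I M} (hK₁ : K₁ ∈ F.carrier U) (hK₂ : K₂ ∈ F.carrier U)
    (h : germAt I M q K₁ = germAt I M q K₂) : ∀ x ∈ U, K₁ x = K₂ x := by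
  obtain ⟨V, hVo, -, hqV, hV⟩ := (Submodule.Quotient.eq _).mp h
  intro x hx
  rw [← sub_eq_zero]
  exact huc U hUo hUc (K₁ - K₂) ((F.carrierSubmodule hUo hUc).sub_mem hK₁ hK₂)
    ⟨V ∩ U, ⟨q, hqV, hq⟩, hVo.inter hUo, inter_subset_right, fun y hy => hV y hy.1⟩ x hx

theorem UniqueContinuation.exists_germAt_eq_of_mem_stalk [LocallyConnectedSpace M]
    (huc : F.UniqueContinuation) (hbr : F.BoundedRank) {U₀ : Set M} (hU₀o : IsOpen U₀)
    (hU₀c : IsConnected U₀) {q : M} (hq : q ∈ U₀) (hκ : kappa F q ≤ fdim F U₀) :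
    ∀ g ∈ stalk F q, ∃ K ∈ F.carrier U₀, germAt I M q K = g := by
  suffices stalk F q ≤ (F.carrierSubmodule hU₀o hU₀c).map (germAt I M q) from
    fun g hg => this hg
  refine Submodule.span_le.mpr ?_
  rintro _ ⟨V, X, hVo, hVc, hqV, hX, rfl⟩
  obtain ⟨W, hW, hWo, hqW, hWc⟩ := locallyConnectedSpace_iff_subsets_isOpen_isConnected.mp
    ‹_› q (V ∩ U₀) ((hVo.inter hU₀o).mem_nhds ⟨hqV, hq⟩)
  obtain ⟨K, hK, hKX⟩ := huc.exists_eqOn_of_fdim_le hU₀o hU₀c (hbr.fdim_lt_aleph0 hU₀o hU₀c)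
    hWo hWc (hW.trans inter_subset_right) ((hbr.fdim_le_kappa hWo hWc hqW).trans hκ)
    (F.restrict_mem V hVo hVc W hWo hWc (hW.trans inter_subset_left) X hX)
  exact ⟨K, hK, (Submodule.Quotient.eq _).mpr
    ⟨W, hWo, hWc, hqW, fun x hx => sub_eq_zero.mpr (hKX x hx)⟩⟩

theorem UniqueContinuation.isSpecial_of_kappa_le [LocallyConnectedSpace M]
    (huc : F.UniqueContinuation) (hbr : F.BoundedRank) {U₀ : Set M} (hU₀o : IsOpen U₀)
    (hU₀c : IsConnected U₀) {q : M} (hq : q ∈ U₀) (hκ : kappa F q ≤ fdim F U₀) : IsSpecial F U₀ q :=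
  ⟨hU₀o, hU₀c, hq, fun _ hK₁ _ hK₂ => huc.eqOn_of_germAt_eq_s7 hU₀o hU₀c hq hK₁ hK₂,
    huc.exists_germAt_eq_of_mem_stalk hbr hU₀o hU₀c hq hκ⟩

end VFSheaf

/-- For an admissible sheaf `𝓕`: if `p ∈ U`, `U` open, and `κ^𝓕` is constant
on `U`, then there is a connected open subset `U' ⊆ U` containing `p` which is `𝓕`-special for
every one of its points. -/
theorem statement7 [LocallyConnectedSpace M] (F : VFSheaf I M) (hF : F.Admissible)
    (U : Set M) (hU : IsOpen U) (p : M) (hp : p ∈ U)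
    (hconst : ∀ q ∈ U, ∀ q' ∈ U, kappa F q = kappa F q') :
    ∃ U' : Set M, U' ⊆ U ∧ p ∈ U' ∧ ∀ q ∈ U', IsSpecial F U' q := by
  obtain ⟨huc, hbr⟩ := hF
  obtain ⟨U₀, hU₀o, hU₀c, hpU₀, hU₀U, hmax⟩ := hbr.exists_fdim_maximal hU hp
  have hκ : kappa F p ≤ fdim F U₀ := huc.kappa_le_of_maximal hU hp hmax
  exact ⟨U₀, hU₀U, hpU₀, fun q hq =>
    huc.isSpecial_of_kappa_le hbr hU₀o hU₀c hq (hconst q (hU₀U hq) p hp ▸ hκ)⟩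
end
end
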